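/- Let G be a finite group and φ ∈ End(G) a nilpotent endomorphism with nullity index n (the least n with φ⁽ⁿ⁾(G) = {1}) such that |ker φ| = p for a prime p. Then φ⁽ⁱ⁾(G) = ker φ⁽ⁿ⁻ⁱ⁾ for all 0 ≤ i ≤ n. -/

import Mathlib

/-!
Write `Kⱼ = ker φʲ`. Since `φʲ` maps `Kⱼ₊₁` into `ker φ` with kernel `Kⱼ`, the index of `Kⱼ` in
`Kⱼ₊₁` divides `p`. The chain `K₀ ≤ K₁ ≤ ⋯` stabilizes for good as soon as two consecutive terms
agree, so it grows strictly up to `Kₙ = G`; hence `|Kⱼ| = pʲ` and `|G| = pⁿ`. Then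
`|φⁱ(G)| = pⁿ / pⁱ = |Kₙ₋ᵢ|`, and `φⁱ(G) ≤ Kₙ₋ᵢ` because `φⁿ⁻ⁱ ∘ φⁱ = φⁿ` is trivial.
-/

namespace MonoidHom

variable {G H K : Type*} [Group G] [Group H] [Group K]

theorem relIndex_ker_ker_comp_dvd (f : G →* H) (g : H →* K) :
    f.ker.relIndex (g.comp f).ker ∣ Nat.card g.ker := by
  rw [Subgroup.relIndex_ker]
  apply Subgroup.card_dvd_of_le
  rintro _ ⟨x, hx, rfl⟩
  exact hx

end MonoidHom

namespace Monoid.End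

open Subgroup

variable {G : Type*} [Group G] (f : Monoid.End G)

theorem ker_pow_succ (j : ℕ) : (f ^ (j + 1)).ker = (f ^ j).ker.comap f := by
  rw [pow_succ]
  rfl

theorem ker_pow_le_ker_pow {i j : ℕ} (h : i ≤ j) : (f ^ i).ker ≤ (f ^ j).ker := by
  obtain ⟨k, rfl⟩ := Nat.exists_eq_add_of_le' h
  rw [pow_add]
  exact MonoidHom.ker_le_comap (f ^ i : G →* G) (f ^ k : G →* G).ker

theorem ker_pow_add_eq_of_ker_pow_succ_eq {j : ℕ} (h : (f ^ (j + 1)).ker = (f ^ j).ker)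
    (m : ℕ) : (f ^ (j + m)).ker = (f ^ j).ker := by
  induction m with
  | zero => rfl
  | succ m ih => rw [← add_assoc, ker_pow_succ, ih, ← ker_pow_succ, h]

theorem ker_pow_lt_ker_pow_succ {n j : ℕ} (hn : (f ^ n).ker = ⊤) (hj : (f ^ j).ker ≠ ⊤) :
    (f ^ j).ker < (f ^ (j + 1)).ker := by
  refine lt_of_le_of_ne (f.ker_pow_le_ker_pow j.le_succ) fun h => hj ?_
  rw [← f.ker_pow_add_eq_of_ker_pow_succ_eq h.symm n, eq_top_iff, ← hn]
  exact f.ker_pow_le_ker_pow (Nat.le_add_left n j)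

variable {p n : ℕ}

theorem card_ker_pow_succ (hp : p.Prime) (hker : Nat.card f.ker = p) (hn : (f ^ n).ker = ⊤)
    {j : ℕ} (hj : (f ^ j).ker ≠ ⊤) :
    Nat.card (f ^ (j + 1)).ker = Nat.card (f ^ j).ker * p := by
  have hlt := f.ker_pow_lt_ker_pow_succ hn hj
  have hdvd : (f ^ j).ker.relIndex (f ^ (j + 1)).ker ∣ p :=
    hker ▸ pow_succ' f j ▸ MonoidHom.relIndex_ker_ker_comp_dvd (f ^ j) f
  obtain hone | hidx := hp.eq_one_or_self_of_dvd _ hdvd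
  · exact absurd (relIndex_eq_one.mp hone) hlt.not_ge
  · rw [← hidx, ← relIndex_bot_left, ← relIndex_bot_left,
      relIndex_mul_relIndex ⊥ _ _ bot_le hlt.le]

theorem card_ker_pow (hp : p.Prime) (hker : Nat.card f.ker = p) (hn : (f ^ n).ker = ⊤)
    (hmin : ∀ j < n, (f ^ j).ker ≠ ⊤) :
    ∀ j ≤ n, Nat.card (f ^ j).ker = p ^ j
  | 0, _ => by rw [pow_zero, pow_zero]; exact card_bot
  | j + 1, hj => by
    rw [f.card_ker_pow_succ hp hker hn (hmin j hj),
      card_ker_pow hp hker hn hmin j (Nat.le_of_succ_le hj), pow_succ]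

theorem range_pow_eq_ker_pow_sub (hp : p.Prime) (hker : Nat.card f.ker = p)
    (hn : (f ^ n).ker = ⊤) (hmin : ∀ j < n, (f ^ j).ker ≠ ⊤) {i : ℕ} (hi : i ≤ n) :
    (f ^ i).range = (f ^ (n - i)).ker := by
  have hG : Nat.card G = p ^ n := by
    rw [← f.card_ker_pow hp hker hn hmin n le_rfl, hn, card_top]
  have : Finite G := Nat.finite_of_card_ne_zero (hG ▸ (pow_pos hp.pos n).ne')
  have hrange : Nat.card (f ^ i).range = p ^ (n - i) := by
    have h := card_mul_index (f ^ i : G →* G).ker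
    have hpow : p ^ n = p ^ i * p ^ (n - i) := by rw [← pow_add, Nat.add_sub_cancel' hi]
    rw [index_ker (f ^ i : G →* G), f.card_ker_pow hp hker hn hmin i hi, hG, hpow] at h
    exact Nat.eq_of_mul_eq_mul_left (pow_pos hp.pos i) h
  refine eq_of_le_of_card_ge ?_ ?_
  · rintro _ ⟨x, rfl⟩
    show (f ^ (n - i) * f ^ i) x = 1
    rw [← pow_add, Nat.sub_add_cancel hi]
    exact (hn ▸ mem_top x : x ∈ (f ^ n).ker)
  · rw [f.card_ker_pow hp hker hn hmin (n - i) (Nat.sub_le n i), hrange]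

end Monoid.End

theorem image_eq_kernel_of_nilpotent {G : Type*} [Group G] (φ : G →* G)
    (n p : ℕ) (hp : p.Prime)
    (hn : ∀ g : G, (⇑φ)^[n] g = 1)
    (hmin : ∀ m < n, ∃ g : G, (⇑φ)^[m] g ≠ 1)
    (hker : Nat.card φ.ker = p) :
    ∀ i ≤ n, Set.range ((⇑φ)^[i]) = {g : G | (⇑φ)^[n - i] g = 1} := by
  let f : Monoid.End G := φ
  have hf : (f ^ n).ker = ⊤ := eq_top_iff.mpr fun g _ => hn g
  have hfmin : ∀ j < n, (f ^ j).ker ≠ ⊤ := fun j hj htop => by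
    obtain ⟨g, hg⟩ := hmin j hj
    exact hg (htop ▸ Subgroup.mem_top g : g ∈ (f ^ j).ker)
  intro i hi
  exact congrArg SetLike.coe (f.range_pow_eq_ker_pow_sub hp hker hf hfmin hi)
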